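/- If s = W(A^T W)^† F and c = (WA)^† W Φ where A has full column rank and W is invertible, then s^T Φ = F^T c, i.e., applying the flux stencil to the data equals evaluating the flux functional on the least-squares polynomial coefficients. -/

import Mathlib

open Matrix

/-- Moore–Penrose pseudoinverse of a full-column-rank matrix: `B† = (BᵀB)⁻¹Bᵀ`. -/
noncomputable def pinvCol {m n : ℕ} (B : Matrix (Fin m) (Fin n) ℝ) : Matrix (Fin n) (Fin m) ℝ :=
  (Bᵀ * B)⁻¹ * Bᵀ

/-- Moore–Penrose pseudoinverse of a full-row-rank matrix: `B† = Bᵀ(BBᵀ)⁻¹`. -/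
noncomputable def pinvRow {n m : ℕ} (B : Matrix (Fin n) (Fin m) ℝ) : Matrix (Fin m) (Fin n) ℝ :=
  Bᵀ * (B * Bᵀ)⁻¹

/-- The Gram matrix `BBᵀ` is symmetric, and `Matrix.inv` commutes with transposition even
at its junk value `0`, so this holds for every `B`. -/
theorem transpose_pinvRow {n m : ℕ} (B : Matrix (Fin n) (Fin m) ℝ) :
    (pinvRow B)ᵀ = pinvCol Bᵀ := by
  rw [pinvRow, pinvCol, transpose_mul, transpose_nonsing_inv, transpose_mul,
    transpose_transpose]

theorem mulVec_pinvRow_dotProduct {n m k : ℕ} (B : Matrix (Fin n) (Fin m) ℝ)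
    (M : Matrix (Fin k) (Fin m) ℝ) (F : Fin n → ℝ) (Φ : Fin k → ℝ) :
    (M *ᵥ (pinvRow B *ᵥ F)) ⬝ᵥ Φ = F ⬝ᵥ (pinvCol Bᵀ *ᵥ (Mᵀ *ᵥ Φ)) := by
  rw [← transpose_pinvRow, mulVec_mulVec, mulVec_mulVec, ← transpose_mul, mulVec_transpose,
    dotProduct_comm, dotProduct_mulVec, dotProduct_comm]

theorem stencil_apply_eq_flux_functional_general {m n : ℕ}
    (A : Matrix (Fin m) (Fin n) ℝ)
    (W : Matrix (Fin m) (Fin m) ℝ) (hWdiag : W.IsDiag)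
    (Φ : Fin m → ℝ) (F : Fin n → ℝ) (s : Fin m → ℝ) (c : Fin n → ℝ)
    (hs : s = W *ᵥ (pinvRow (Aᵀ * W) *ᵥ F))
    (hc : c = pinvCol (W * A) *ᵥ (W *ᵥ Φ)) :
    s ⬝ᵥ Φ = F ⬝ᵥ c := by
  have hW : Wᵀ = W := hWdiag.isSymm
  rw [hs, hc, mulVec_pinvRow_dotProduct, transpose_mul, transpose_transpose, hW]

/-- Applying the flux stencil `s = W(AᵀW)†F` to the data `Φ` equals evaluating the
flux functional `F` on the weighted least squares coefficients `c = (WA)†WΦ`: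
`sᵀ Φ = Fᵀ c`. -/
theorem stencil_apply_eq_flux_functional {m n : ℕ} (hmn : n ≤ m)
    (A : Matrix (Fin m) (Fin n) ℝ) (hA : A.rank = n)
    (W : Matrix (Fin m) (Fin m) ℝ) (hWdiag : W.IsDiag) (hWinv : IsUnit W.det)
    (Φ : Fin m → ℝ) (F : Fin n → ℝ) (s : Fin m → ℝ) (c : Fin n → ℝ)
    (hs : s = W *ᵥ (pinvRow (Aᵀ * W) *ᵥ F))
    (hc : c = pinvCol (W * A) *ᵥ (W *ᵥ Φ)) :
    s ⬝ᵥ Φ = F ⬝ᵥ c :=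
  stencil_apply_eq_flux_functional_general A W hWdiag Φ F s c hs hc
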